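/- arXiv:2603.04231 — 2 statements merged into one kernel-verified Lean document; each statement's English description precedes it below -/
import Mathlib

section
/- Let $U_1, U_2 \subseteq \mathbb{R}^p$ be linear subspaces, $\theta \in (0,2)$, and $v^0 \in \mathbb{R}^p$. The limit $v^*$ of the governing sequence $(v^k)$ of the relaxed Douglas–Rachford iteration started at $v^0$ satisfies $v^* = P_{U_1 \cap U_2}(v^0) + P_{U_1^\perp \cap U_2^\perp}(v^0)$. -/
/-!
The relaxed Douglas–Rachford operator `T = 1 + θ (P₂ (2 P₁ - 1) - P₁)` is a continuous linear map,
so the limit `v*` is a fixed point of `T`. For `θ ≠ 0`, a fixed point `x` splits as `a + b` with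
`a = P₁ x ∈ U₁ ⊓ U₂` and `b = x - P₁ x ∈ U₁ᗮ ⊓ U₂ᗮ`, hence `x = P_{U₁ ⊓ U₂} x + P_{U₁ᗮ ⊓ U₂ᗮ} x`.
Both of these projections satisfy `P ∘ T = P`, so they are constant along the iteration and
take the same value at `v*` as at `v⁰`.
-/

open Filter Topology

noncomputable def proj {p : ℕ} (U : Submodule ℝ (EuclideanSpace ℝ (Fin p)))
    (v : EuclideanSpace ℝ (Fin p)) : EuclideanSpace ℝ (Fin p) :=
  (U.orthogonalProjectionOnto v : EuclideanSpace ℝ (Fin p))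

theorem apply_eq_of_tendsto_iterate {α β : Type*} [TopologicalSpace α] [TopologicalSpace β]
    [T2Space β] {f : α → α} {g : α → β} (hg : Continuous g) (hgf : g ∘ f = g) {x y : α}
    (h : Tendsto (fun n ↦ f^[n] x) atTop (𝓝 y)) : g y = g x :=
  tendsto_nhds_unique ((hg.tendsto y).comp h) <| by
    have hconst : (g ∘ fun n ↦ f^[n] x) = fun _ ↦ g x :=
      funext fun n ↦ congrFun (Function.iterate_invariant hgf n) x
    exact hconst ▸ tendsto_const_nhds

namespace Submodule

variable {E : Type*} [NormedAddCommGroup E] [InnerProductSpace ℝ E]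

theorem starProjection_add_of_isOrtho {U V : Submodule ℝ E} [U.HasOrthogonalProjection]
    (h : U ⟂ V) {a b : E} (ha : a ∈ U) (hb : b ∈ V) : U.starProjection (a + b) = a := by
  rw [map_add, starProjection_eq_self_iff.mpr ha,
    (starProjection_apply_eq_zero_iff U).mpr (h.symm hb), add_zero]

variable (U₁ U₂ : Submodule ℝ E) [U₁.HasOrthogonalProjection] [U₂.HasOrthogonalProjection]

noncomputable def relaxedDouglasRachford (θ : ℝ) : E →L[ℝ] E :=
  1 + θ • (U₂.starProjection ∘L (2 • U₁.starProjection - 1) - U₁.starProjection)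

variable {U₁ U₂} {θ : ℝ}

theorem relaxedDouglasRachford_apply (x : E) :
    relaxedDouglasRachford U₁ U₂ θ x =
      x + θ • (U₂.starProjection ((2 : ℝ) • U₁.starProjection x - x) - U₁.starProjection x) := by
  simp [relaxedDouglasRachford, ofNat_smul_eq_nsmul]

theorem starProjection_inf_comp_relaxedDouglasRachford [(U₁ ⊓ U₂).HasOrthogonalProjection] :
    (U₁ ⊓ U₂).starProjection ∘L relaxedDouglasRachford U₁ U₂ θ = (U₁ ⊓ U₂).starProjection := by
  have h₁ := starProjection_comp_starProjection_of_le (inf_le_left : U₁ ⊓ U₂ ≤ U₁)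
  have h₂ := starProjection_comp_starProjection_of_le (inf_le_right : U₁ ⊓ U₂ ≤ U₂)
  simp only [relaxedDouglasRachford, ContinuousLinearMap.comp_add, ContinuousLinearMap.comp_smul,
    ContinuousLinearMap.comp_sub, ← ContinuousLinearMap.comp_assoc, h₁, h₂,
    ContinuousLinearMap.one_def, ContinuousLinearMap.comp_id]
  module

theorem starProjection_inf_orthogonal_comp_relaxedDouglasRachford
    [(U₁ᗮ ⊓ U₂ᗮ).HasOrthogonalProjection] :
    (U₁ᗮ ⊓ U₂ᗮ).starProjection ∘L relaxedDouglasRachford U₁ U₂ θ =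
      (U₁ᗮ ⊓ U₂ᗮ).starProjection := by
  have h₁ := ((isOrtho_orthogonal_left U₁).mono_left
    (inf_le_left : U₁ᗮ ⊓ U₂ᗮ ≤ U₁ᗮ)).starProjection_comp_starProjection
  have h₂ := ((isOrtho_orthogonal_left U₂).mono_left
    (inf_le_right : U₁ᗮ ⊓ U₂ᗮ ≤ U₂ᗮ)).starProjection_comp_starProjection
  simp only [relaxedDouglasRachford, ContinuousLinearMap.comp_add, ContinuousLinearMap.comp_smul,
    ContinuousLinearMap.comp_sub, ← ContinuousLinearMap.comp_assoc, h₁, h₂,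
    ContinuousLinearMap.zero_comp, ContinuousLinearMap.one_def, ContinuousLinearMap.comp_id]
  simp

theorem mem_inf_of_isFixedPt_relaxedDouglasRachford (hθ : θ ≠ 0) {x : E}
    (hx : Function.IsFixedPt (relaxedDouglasRachford U₁ U₂ θ) x) :
    U₁.starProjection x ∈ U₁ ⊓ U₂ ∧ x - U₁.starProjection x ∈ U₁ᗮ ⊓ U₂ᗮ := by
  rw [Function.IsFixedPt, relaxedDouglasRachford_apply, add_eq_left, smul_eq_zero,
    sub_eq_zero] at hx
  set a := U₁.starProjection x
  set b := x - a
  have hreflect : U₂.starProjection (a - b) = a := by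
    convert hx.resolve_left hθ using 2
    module
  have hb₂ : -b ∈ U₂ᗮ := by
    simpa [hreflect] using U₂.sub_starProjection_mem_orthogonal (a - b)
  exact ⟨⟨U₁.starProjection_apply_mem x, hreflect ▸ U₂.starProjection_apply_mem (a - b)⟩,
    U₁.sub_starProjection_mem_orthogonal x, by simpa using hb₂⟩

theorem eq_starProjection_inf_add_of_isFixedPt_relaxedDouglasRachford
    [(U₁ ⊓ U₂).HasOrthogonalProjection] [(U₁ᗮ ⊓ U₂ᗮ).HasOrthogonalProjection] (hθ : θ ≠ 0) {x : E}
    (hx : Function.IsFixedPt (relaxedDouglasRachford U₁ U₂ θ) x) :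
    x = (U₁ ⊓ U₂).starProjection x + (U₁ᗮ ⊓ U₂ᗮ).starProjection x := by
  set a := U₁.starProjection x
  set b := x - a
  obtain ⟨ha, hb⟩ := mem_inf_of_isFixedPt_relaxedDouglasRachford hθ hx
  have hortho : U₁ ⊓ U₂ ⟂ U₁ᗮ ⊓ U₂ᗮ := (isOrtho_orthogonal_right U₁).mono inf_le_left inf_le_left
  have hab : x = a + b := (add_sub_cancel a x).symm
  calc x = a + b := hab
    _ = (U₁ ⊓ U₂).starProjection (a + b) + (U₁ᗮ ⊓ U₂ᗮ).starProjection (b + a) := by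
      rw [starProjection_add_of_isOrtho hortho ha hb,
        starProjection_add_of_isOrtho hortho.symm hb ha]
    _ = _ := by rw [add_comm b a, ← hab]

end Submodule

theorem stmt1 {p : ℕ} (U₁ U₂ : Submodule ℝ (EuclideanSpace ℝ (Fin p)))
    (θ : ℝ) (hθ : θ ∈ Set.Ioo (0 : ℝ) 2)
    (v : ℕ → EuclideanSpace ℝ (Fin p))
    (hv : ∀ k, v (k + 1) =
      v k + θ • (proj U₂ ((2 : ℝ) • proj U₁ (v k) - v k) - proj U₁ (v k)))
    (vstar : EuclideanSpace ℝ (Fin p))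
    (hlim : Tendsto v atTop (𝓝 vstar)) :
    vstar = proj (U₁ ⊓ U₂) (v 0) + proj (U₁ᗮ ⊓ U₂ᗮ) (v 0) := by
  set T := Submodule.relaxedDouglasRachford U₁ U₂ θ
  have hiter : v = fun n ↦ T^[n] (v 0) := by
    funext n
    induction n with
    | zero => rfl
    | succ n ih =>
      rw [Function.iterate_succ_apply', ← ih, hv, Submodule.relaxedDouglasRachford_apply]; rfl
  rw [hiter] at hlim
  have hfix : Function.IsFixedPt T vstar :=
    isFixedPt_of_tendsto_iterate hlim T.continuous.continuousAt
  have hinf := apply_eq_of_tendsto_iterate (U₁ ⊓ U₂).starProjection.continuous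
    (by exact congrArg DFunLike.coe Submodule.starProjection_inf_comp_relaxedDouglasRachford) hlim
  have hinf_orth := apply_eq_of_tendsto_iterate (U₁ᗮ ⊓ U₂ᗮ).starProjection.continuous
    (by exact (congrArg DFunLike.coe
      Submodule.starProjection_inf_orthogonal_comp_relaxedDouglasRachford)) hlim
  rw [Submodule.eq_starProjection_inf_add_of_isFixedPt_relaxedDouglasRachford hθ.1.ne' hfix,
    hinf, hinf_orth]
  rfl
end

section
/- Let $U_1, U_2 \subseteq \mathbb{R}^p$ be linear subspaces and let $c_F = c_F(U_1,U_2)$ be the cosine of the Friedrichs angle between them. For the Douglas–Rachford iteration with relaxation parameter $\theta = 1$ started at any $v^0 \in \mathbb{R}^p$, the governing sequence converges linearly with rate $c_F$ to its limit $v^* = P_{U_1 \cap U_2}(v^0) + P_{U_1^\perp \cap U_2^\perp}(v^0)$: for every $k \geq 0$, $\|v^k - v^*\| \leq c_F^{\,k} \, \|v^0 - v^*\|$. -/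
open Filter Topology RealInnerProductSpace

/-- The cosine of the Friedrichs angle between two subspaces. -/
noncomputable def cosFriedrichs {p : ℕ}
    (U₁ U₂ : Submodule ℝ (EuclideanSpace ℝ (Fin p))) : ℝ :=
  sSup {r : ℝ | ∃ u₁ u₂ : EuclideanSpace ℝ (Fin p),
    ‖u₁‖ ≤ 1 ∧ ‖u₂‖ ≤ 1 ∧ u₁ ∈ U₁ ⊓ (U₁ ⊓ U₂)ᗮ ∧ u₂ ∈ U₂ ⊓ (U₁ ⊓ U₂)ᗮ ∧ r = ⟪u₁, u₂⟫}

/-!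
Write `C = U₁ ⊓ U₂` and `D = U₁ᗮ ⊓ U₂ᗮ`. The θ = 1 Douglas–Rachford step is the linear map
`T = P_{U₂} P_{U₁} + P_{U₂ᗮ} P_{U₁ᗮ}`. It fixes `C` and `D`, and so does its adjoint (the same
operator with `U₁` and `U₂` swapped), hence `T` preserves `(C ⊔ D)ᗮ`, which contains `v⁰ - v*`.
On `(C ⊔ D)ᗮ`, Pythagoras splits `‖T x‖²` as `‖P_{U₂} P_{U₁} x‖² + ‖P_{U₂ᗮ} P_{U₁ᗮ} x‖²`, and
each term is at most `c_F²` times the matching part of `‖x‖²`: the first directly from the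
definition of `c_F`, the second because a vector `x ∈ U₁ᗮ ∩ (U₁ + U₂)` can be written as
`P_{U₁ᗮ} u` with `u ∈ U₂ ⊓ Cᗮ`, which forces `‖P_{U₂} x‖² ≥ (1 - c_F²) ‖x‖²`. Finally `c_F < 1`
because the supremum defining it is attained.
-/

open Metric Submodule

section Projection

variable {𝕜 E : Type*} [RCLike 𝕜] [NormedAddCommGroup E] [InnerProductSpace 𝕜 E]

theorem Submodule.starProjection_mem_orthogonal_of_le {K U : Submodule 𝕜 E}
    [U.HasOrthogonalProjection] (hKU : K ≤ U) {x : E} (hx : x ∈ Kᗮ) :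
    U.starProjection x ∈ Kᗮ := by
  intro u hu
  rw [← inner_starProjection_left_eq_right, starProjection_eq_self_iff.2 (hKU hu)]
  exact hx u hu

theorem Submodule.IsOrtho.sub_starProjection_add_starProjection_mem_orthogonal
    {K L : Submodule 𝕜 E} [K.HasOrthogonalProjection] [L.HasOrthogonalProjection]
    (hKL : K ⟂ L) (x : E) : x - (K.starProjection x + L.starProjection x) ∈ Kᗮ := by
  rw [← sub_sub]
  exact sub_mem (sub_starProjection_mem_orthogonal x)
    (isOrtho_iff_le.1 hKL.symm (starProjection_apply_mem L x))

end Projection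

theorem norm_sub_le_pow_mul_of_mapsTo {F G : Type*} [SeminormedAddCommGroup F] [FunLike G F F]
    [AddMonoidHomClass G F F] {T : G} {S : Set F} {c : ℝ} (hc : 0 ≤ c)
    (hS : Set.MapsTo T S S) (hT : ∀ x ∈ S, ‖T x‖ ≤ c * ‖x‖) {w : F} (hw : T w = w)
    {v : ℕ → F} (hv : ∀ k, v (k + 1) = T (v k)) (h₀ : v 0 - w ∈ S) (k : ℕ) :
    ‖v k - w‖ ≤ c ^ k * ‖v 0 - w‖ := by
  have hstep (k : ℕ) : v (k + 1) - w = T (v k - w) := by rw [hv, map_sub, hw]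
  have hmem (k : ℕ) : v k - w ∈ S := by
    induction k with
    | zero => exact h₀
    | succ k ih => exact hstep k ▸ hS ih
  induction k with
  | zero => simp
  | succ k ih =>
    calc ‖v (k + 1) - w‖ = ‖T (v k - w)‖ := by rw [hstep]
      _ ≤ c * ‖v k - w‖ := hT _ (hmem k)
      _ ≤ c * (c ^ k * ‖v 0 - w‖) := by gcongr
      _ = c ^ (k + 1) * ‖v 0 - w‖ := by ring

section DouglasRachford

variable {E : Type*} [NormedAddCommGroup E] [InnerProductSpace ℝ E]

theorem sub_starProjection_inf_add_starProjection_inf_orthogonal_mem (U₁ U₂ : Submodule ℝ E)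
    [(U₁ ⊓ U₂).HasOrthogonalProjection] [(U₁ᗮ ⊓ U₂ᗮ).HasOrthogonalProjection] (x : E) :
    x - ((U₁ ⊓ U₂).starProjection x + (U₁ᗮ ⊓ U₂ᗮ).starProjection x) ∈
      (U₁ ⊓ U₂)ᗮ ⊓ (U₁ᗮ ⊓ U₂ᗮ)ᗮ := by
  have hortho : U₁ᗮ ⊓ U₂ᗮ ⟂ U₁ ⊓ U₂ :=
    isOrtho_iff_le.2 (inf_le_left.trans (orthogonal_le inf_le_left))
  refine ⟨hortho.symm.sub_starProjection_add_starProjection_mem_orthogonal x, ?_⟩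
  rw [add_comm]
  exact hortho.sub_starProjection_add_starProjection_mem_orthogonal x

variable (U₁ U₂ : Submodule ℝ E) [U₁.HasOrthogonalProjection] [U₂.HasOrthogonalProjection]

noncomputable def douglasRachford : E →L[ℝ] E :=
  U₂.starProjection ∘L U₁.starProjection + U₂ᗮ.starProjection ∘L U₁ᗮ.starProjection

theorem douglasRachford_apply (x : E) :
    douglasRachford U₁ U₂ x =
      x + (U₂.starProjection ((2 : ℝ) • U₁.starProjection x - x) - U₁.starProjection x) := by
  simp only [douglasRachford, add_apply, ContinuousLinearMap.comp_apply,
    starProjection_orthogonal_val, map_sub, map_smul]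
  module

theorem inner_douglasRachford_left (x y : E) :
    ⟪douglasRachford U₁ U₂ x, y⟫ = ⟪x, douglasRachford U₂ U₁ y⟫ := by
  simp only [douglasRachford, add_apply, ContinuousLinearMap.comp_apply,
    inner_add_left, inner_add_right, inner_starProjection_left_eq_right]

variable {U₁ U₂} in
theorem douglasRachford_apply_of_mem_inf {x : E} (hx : x ∈ U₁ ⊓ U₂) :
    douglasRachford U₁ U₂ x = x := by
  simp [douglasRachford, starProjection_eq_self_iff.2 hx.1, starProjection_eq_self_iff.2 hx.2,
    starProjection_orthogonal_apply_eq_zero hx.1]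

variable {U₁ U₂} in
theorem douglasRachford_apply_of_mem_inf_orthogonal {x : E} (hx : x ∈ U₁ᗮ ⊓ U₂ᗮ) :
    douglasRachford U₁ U₂ x = x := by
  simp [douglasRachford, (starProjection_apply_eq_zero_iff U₁).2 hx.1,
    starProjection_eq_self_iff.2 hx.1, starProjection_eq_self_iff.2 hx.2]

theorem douglasRachford_mem_orthogonal {K : Submodule ℝ E}
    (hK : ∀ u ∈ K, douglasRachford U₂ U₁ u = u) {x : E} (hx : x ∈ Kᗮ) :
    douglasRachford U₁ U₂ x ∈ Kᗮ := by
  intro u hu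
  rw [← inner_douglasRachford_left, hK u hu]
  exact hx u hu

theorem mapsTo_douglasRachford :
    Set.MapsTo (douglasRachford U₁ U₂) ((U₁ ⊓ U₂)ᗮ ⊓ (U₁ᗮ ⊓ U₂ᗮ)ᗮ : Submodule ℝ E)
      ((U₁ ⊓ U₂)ᗮ ⊓ (U₁ᗮ ⊓ U₂ᗮ)ᗮ : Submodule ℝ E) := fun _ hx ↦
  ⟨douglasRachford_mem_orthogonal U₁ U₂ (K := U₁ ⊓ U₂)
      (fun _ hu ↦ douglasRachford_apply_of_mem_inf ⟨hu.2, hu.1⟩) hx.1,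
    douglasRachford_mem_orthogonal U₁ U₂ (K := U₁ᗮ ⊓ U₂ᗮ)
      (fun _ hu ↦ douglasRachford_apply_of_mem_inf_orthogonal ⟨hu.2, hu.1⟩) hx.2⟩

variable [(U₁ ⊓ U₂).HasOrthogonalProjection] [(U₁ᗮ ⊓ U₂ᗮ).HasOrthogonalProjection]

theorem douglasRachford_starProjection_add_starProjection (x : E) :
    douglasRachford U₁ U₂
        ((U₁ ⊓ U₂).starProjection x + (U₁ᗮ ⊓ U₂ᗮ).starProjection x) =
      (U₁ ⊓ U₂).starProjection x + (U₁ᗮ ⊓ U₂ᗮ).starProjection x := by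
  rw [map_add, douglasRachford_apply_of_mem_inf (starProjection_apply_mem _ x),
    douglasRachford_apply_of_mem_inf_orthogonal (starProjection_apply_mem _ x)]

end DouglasRachford

section Friedrichs

variable {p : ℕ} (U₁ U₂ : Submodule ℝ (EuclideanSpace ℝ (Fin p)))

def friedrichsPairs : Set (EuclideanSpace ℝ (Fin p) × EuclideanSpace ℝ (Fin p)) :=
  (closedBall 0 1 ∩ (U₁ ⊓ (U₁ ⊓ U₂)ᗮ : Submodule ℝ (EuclideanSpace ℝ (Fin p)))) ×ˢ
    (closedBall 0 1 ∩ (U₂ ⊓ (U₁ ⊓ U₂)ᗮ : Submodule ℝ (EuclideanSpace ℝ (Fin p))))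

theorem cosFriedrichs_eq_sSup_image :
    cosFriedrichs U₁ U₂ = sSup ((fun q ↦ ⟪q.1, q.2⟫) '' friedrichsPairs U₁ U₂) := by
  rw [cosFriedrichs]
  congr 1
  ext r
  constructor
  · rintro ⟨u₁, u₂, h₁, h₂, hu₁, hu₂, rfl⟩
    exact ⟨(u₁, u₂), ⟨⟨by simpa using h₁, hu₁⟩, ⟨by simpa using h₂, hu₂⟩⟩, rfl⟩
  · rintro ⟨⟨u₁, u₂⟩, ⟨⟨h₁, hu₁⟩, ⟨h₂, hu₂⟩⟩, rfl⟩
    exact ⟨u₁, u₂, by simpa using h₁, by simpa using h₂, hu₁, hu₂, rfl⟩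

theorem isCompact_image_inner_friedrichsPairs :
    IsCompact ((fun q ↦ ⟪q.1, q.2⟫) '' friedrichsPairs U₁ U₂) :=
  (((isCompact_closedBall _ _).inter_right (Submodule.closed_of_finiteDimensional _)).prod
    ((isCompact_closedBall _ _).inter_right (Submodule.closed_of_finiteDimensional _))).image
    continuous_inner

theorem zero_mem_friedrichsPairs : (0, 0) ∈ friedrichsPairs U₁ U₂ :=
  ⟨⟨by simp, zero_mem _⟩, ⟨by simp, zero_mem _⟩⟩

theorem cosFriedrichs_comm : cosFriedrichs U₁ U₂ = cosFriedrichs U₂ U₁ := by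
  unfold cosFriedrichs
  rw [inf_comm U₁ U₂]
  congr 1
  ext r
  constructor <;>
  · rintro ⟨u₁, u₂, h₁, h₂, hu₁, hu₂, rfl⟩
    exact ⟨u₂, u₁, h₂, h₁, hu₂, hu₁, real_inner_comm _ _⟩

theorem cosFriedrichs_nonneg : 0 ≤ cosFriedrichs U₁ U₂ := by
  rw [cosFriedrichs_eq_sSup_image]
  exact le_csSup (isCompact_image_inner_friedrichsPairs U₁ U₂).bddAbove
    ⟨_, zero_mem_friedrichsPairs U₁ U₂, inner_zero_left _⟩

theorem cosFriedrichs_lt_one : cosFriedrichs U₁ U₂ < 1 := by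
  obtain ⟨⟨u₁, u₂⟩, ⟨⟨h₁, hu₁⟩, ⟨h₂, hu₂⟩⟩, hc⟩ :=
    (isCompact_image_inner_friedrichsPairs U₁ U₂).sSup_mem
      ⟨_, _, zero_mem_friedrichsPairs U₁ U₂, rfl⟩
  rw [cosFriedrichs_eq_sSup_image, ← hc]
  simp only [mem_closedBall_zero_iff] at h₁ h₂ ⊢
  by_cases heq : u₁ = u₂
  · subst heq
    rw [hu₁.2 u₁ ⟨hu₁.1, hu₂.1⟩]
    exact one_pos
  · have : 0 < ‖u₁ - u₂‖ ^ 2 := by positivity [sub_ne_zero.2 heq]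
    rw [norm_sub_sq_real] at this
    nlinarith [norm_nonneg u₁, norm_nonneg u₂]

variable {U₁ U₂}

theorem inner_le_cosFriedrichs {u₁ u₂ : EuclideanSpace ℝ (Fin p)} (h₁ : ‖u₁‖ ≤ 1)
    (h₂ : ‖u₂‖ ≤ 1) (hu₁ : u₁ ∈ U₁ ⊓ (U₁ ⊓ U₂)ᗮ) (hu₂ : u₂ ∈ U₂ ⊓ (U₁ ⊓ U₂)ᗮ) :
    ⟪u₁, u₂⟫ ≤ cosFriedrichs U₁ U₂ := by
  rw [cosFriedrichs_eq_sSup_image]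
  exact le_csSup (isCompact_image_inner_friedrichsPairs U₁ U₂).bddAbove
    ⟨(u₁, u₂), ⟨⟨by simpa using h₁, hu₁⟩, ⟨by simpa using h₂, hu₂⟩⟩, rfl⟩

theorem inner_le_cosFriedrichs_mul {u₁ u₂ : EuclideanSpace ℝ (Fin p)}
    (hu₁ : u₁ ∈ U₁ ⊓ (U₁ ⊓ U₂)ᗮ) (hu₂ : u₂ ∈ U₂ ⊓ (U₁ ⊓ U₂)ᗮ) :
    ⟪u₁, u₂⟫ ≤ cosFriedrichs U₁ U₂ * (‖u₁‖ * ‖u₂‖) := by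
  rcases eq_or_ne u₁ 0 with rfl | h₁
  · simp
  rcases eq_or_ne u₂ 0 with rfl | h₂
  · simp
  have h := inner_le_cosFriedrichs (norm_smul_inv_norm (𝕜 := ℝ) h₁).le
    (norm_smul_inv_norm (𝕜 := ℝ) h₂).le (smul_mem _ _ hu₁) (smul_mem _ _ hu₂)
  rw [real_inner_smul_left, real_inner_smul_right, ← mul_assoc, ← mul_inv,
    inv_mul_le_iff₀ (by positivity)] at h
  simp only [RCLike.ofReal_real_eq_id, id_eq] at h
  linarith

theorem norm_starProjection_le_cosFriedrichs_mul {x : EuclideanSpace ℝ (Fin p)}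
    (hx : x ∈ U₁ ⊓ (U₁ ⊓ U₂)ᗮ) :
    ‖U₂.starProjection x‖ ≤ cosFriedrichs U₁ U₂ * ‖x‖ := by
  set q := U₂.starProjection x
  have hq : q ∈ U₂ ⊓ (U₁ ⊓ U₂)ᗮ :=
    ⟨starProjection_apply_mem U₂ x, starProjection_mem_orthogonal_of_le inf_le_right hx.2⟩
  have hsq : ‖q‖ ^ 2 ≤ cosFriedrichs U₁ U₂ * ‖x‖ * ‖q‖ := by
    calc ‖q‖ ^ 2 = ⟪x, q⟫ := by
          rw [← real_inner_self_eq_norm_sq, ← inner_starProjection_left_eq_right,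
            starProjection_eq_self_iff.2 hq.1, real_inner_comm]
      _ ≤ cosFriedrichs U₁ U₂ * ‖x‖ * ‖q‖ := by
          rw [mul_assoc]; exact inner_le_cosFriedrichs_mul hx hq
  rcases (norm_nonneg q).eq_or_lt with h | h
  · rw [← h]
    exact mul_nonneg (cosFriedrichs_nonneg U₁ U₂) (norm_nonneg x)
  · nlinarith

theorem exists_starProjection_orthogonal_eq {x : EuclideanSpace ℝ (Fin p)}
    (hx : x ∈ U₁ᗮ ⊓ (U₁ᗮ ⊓ U₂ᗮ)ᗮ) :
    ∃ u ∈ U₂ ⊓ (U₂ ⊓ U₁)ᗮ, U₁ᗮ.starProjection u = x := by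
  have hx_sup : x ∈ U₁ ⊔ U₂ := by
    rw [← orthogonal_orthogonal (U₁ ⊔ U₂), ← inf_orthogonal]
    exact hx.2
  obtain ⟨a, ha, b, hb, hab⟩ := mem_sup.1 hx_sup
  set u := b - (U₁ ⊓ U₂).starProjection b with hu_def
  have hux : u - x ∈ U₁ := by
    rw [show u - x = -(a + (U₁ ⊓ U₂).starProjection b) by rw [hu_def, ← hab]; abel]
    exact neg_mem (add_mem ha (starProjection_apply_mem (U₁ ⊓ U₂) b).1)
  refine ⟨u, ⟨sub_mem hb (starProjection_apply_mem (U₁ ⊓ U₂) b).2,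
    inf_comm U₁ U₂ ▸ sub_starProjection_mem_orthogonal b⟩, ?_⟩
  rw [starProjection_orthogonal_val,
    eq_starProjection_of_mem_orthogonal' hux hx.1 (sub_add_cancel u x).symm, sub_sub_cancel]

theorem one_sub_sq_cosFriedrichs_mul_norm_sq_le {x : EuclideanSpace ℝ (Fin p)}
    (hx : x ∈ U₁ᗮ ⊓ (U₁ᗮ ⊓ U₂ᗮ)ᗮ) :
    (1 - cosFriedrichs U₁ U₂ ^ 2) * ‖x‖ ^ 2 ≤ ‖U₂.starProjection x‖ ^ 2 := by
  obtain ⟨u, hu, rfl⟩ := exists_starProjection_orthogonal_eq hx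
  set x := U₁ᗮ.starProjection u
  have hc₀ := cosFriedrichs_nonneg U₁ U₂
  have hc₁ := (cosFriedrichs_lt_one U₁ U₂).le
  have hu_sq : (1 - cosFriedrichs U₁ U₂ ^ 2) * ‖u‖ ^ 2 ≤ ‖x‖ ^ 2 := by
    have hPu : ‖U₁.starProjection u‖ ≤ cosFriedrichs U₁ U₂ * ‖u‖ := by
      rw [cosFriedrichs_comm]
      exact norm_starProjection_le_cosFriedrichs_mul hu
    nlinarith [norm_sq_eq_add_norm_sq_starProjection u U₁,
      pow_le_pow_left₀ (norm_nonneg _) hPu 2]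
  have hx_sq : ‖x‖ ^ 2 ≤ ‖u‖ * ‖U₂.starProjection x‖ :=
    calc ‖x‖ ^ 2 = ⟪u, U₂.starProjection x⟫ := by
          rw [← inner_starProjection_left_eq_right, starProjection_eq_self_iff.2 hu.1,
            ← starProjection_eq_self_iff.2 hx.1, ← inner_starProjection_left_eq_right,
            starProjection_eq_self_iff.2 hx.1, real_inner_self_eq_norm_sq]
      _ ≤ ‖u‖ * ‖U₂.starProjection x‖ := real_inner_le_norm _ _
  rcases (norm_nonneg x).eq_or_lt with hx₀ | hx₀
  · rw [← hx₀]
    simp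
  have : (1 - cosFriedrichs U₁ U₂ ^ 2) * ‖x‖ ^ 2 * ‖x‖ ^ 2 ≤
      ‖U₂.starProjection x‖ ^ 2 * ‖x‖ ^ 2 :=
    calc (1 - cosFriedrichs U₁ U₂ ^ 2) * ‖x‖ ^ 2 * ‖x‖ ^ 2
        ≤ (1 - cosFriedrichs U₁ U₂ ^ 2) * (‖u‖ * ‖U₂.starProjection x‖) ^ 2 := by
          rw [mul_assoc, ← sq]; gcongr; nlinarith
      _ ≤ ‖U₂.starProjection x‖ ^ 2 * ‖x‖ ^ 2 := by
          rw [mul_pow, ← mul_assoc, mul_comm]; gcongr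
  exact le_of_mul_le_mul_right this (by positivity)

theorem norm_starProjection_orthogonal_le_cosFriedrichs_mul {x : EuclideanSpace ℝ (Fin p)}
    (hx : x ∈ U₁ᗮ ⊓ (U₁ᗮ ⊓ U₂ᗮ)ᗮ) :
    ‖U₂ᗮ.starProjection x‖ ≤ cosFriedrichs U₁ U₂ * ‖x‖ := by
  have hc₀ := cosFriedrichs_nonneg U₁ U₂
  rw [← pow_le_pow_iff_left₀ (norm_nonneg _) (by positivity) two_ne_zero, mul_pow]
  nlinarith [norm_sq_eq_add_norm_sq_starProjection x U₂,
    one_sub_sq_cosFriedrichs_mul_norm_sq_le hx]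

theorem norm_douglasRachford_le {x : EuclideanSpace ℝ (Fin p)}
    (hx : x ∈ (U₁ ⊓ U₂)ᗮ ⊓ (U₁ᗮ ⊓ U₂ᗮ)ᗮ) :
    ‖douglasRachford U₁ U₂ x‖ ≤ cosFriedrichs U₁ U₂ * ‖x‖ := by
  set y := U₁.starProjection x
  set z := U₁ᗮ.starProjection x
  have hy : ‖U₂.starProjection y‖ ≤ cosFriedrichs U₁ U₂ * ‖y‖ :=
    norm_starProjection_le_cosFriedrichs_mul
      ⟨starProjection_apply_mem _ x, starProjection_mem_orthogonal_of_le inf_le_left hx.1⟩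
  have hz : ‖U₂ᗮ.starProjection z‖ ≤ cosFriedrichs U₁ U₂ * ‖z‖ :=
    norm_starProjection_orthogonal_le_cosFriedrichs_mul
      ⟨starProjection_apply_mem _ x, starProjection_mem_orthogonal_of_le inf_le_left hx.2⟩
  have hpyth_out : ‖douglasRachford U₁ U₂ x‖ ^ 2 =
      ‖U₂.starProjection y‖ ^ 2 + ‖U₂ᗮ.starProjection z‖ ^ 2 := by
    rw [sq, sq, sq, ← norm_add_sq_eq_norm_sq_add_norm_sq_real
      (inner_right_of_mem_orthogonal (starProjection_apply_mem _ _)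
        (starProjection_apply_mem _ _))]
    rfl
  have hpyth_in := norm_sq_eq_add_norm_sq_starProjection x U₁
  have hc := cosFriedrichs_nonneg U₁ U₂
  rw [← pow_le_pow_iff_left₀ (norm_nonneg _) (by positivity) two_ne_zero, hpyth_out, mul_pow,
    hpyth_in]
  nlinarith [norm_nonneg (U₂.starProjection y), norm_nonneg (U₂ᗮ.starProjection z)]

end Friedrichs

theorem stmt3 {p : ℕ} (U₁ U₂ : Submodule ℝ (EuclideanSpace ℝ (Fin p)))
    (v : ℕ → EuclideanSpace ℝ (Fin p))
    (hv : ∀ k, v (k + 1) =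
      v k + (proj U₂ ((2 : ℝ) • proj U₁ (v k) - v k) - proj U₁ (v k))) :
    Tendsto v atTop (𝓝 (proj (U₁ ⊓ U₂) (v 0) + proj (U₁ᗮ ⊓ U₂ᗮ) (v 0))) ∧
    ∀ k : ℕ,
      ‖v k - (proj (U₁ ⊓ U₂) (v 0) + proj (U₁ᗮ ⊓ U₂ᗮ) (v 0))‖ ≤
        (cosFriedrichs U₁ U₂) ^ k *
          ‖v 0 - (proj (U₁ ⊓ U₂) (v 0) + proj (U₁ᗮ ⊓ U₂ᗮ) (v 0))‖ := by
  have hproj (U : Submodule ℝ (EuclideanSpace ℝ (Fin p))) (x : EuclideanSpace ℝ (Fin p)) :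
      proj U x = U.starProjection x := rfl
  simp only [hproj] at hv ⊢
  set w := (U₁ ⊓ U₂).starProjection (v 0) + (U₁ᗮ ⊓ U₂ᗮ).starProjection (v 0)
  have hbound := norm_sub_le_pow_mul_of_mapsTo (cosFriedrichs_nonneg U₁ U₂)
    (mapsTo_douglasRachford U₁ U₂) (fun _ ↦ norm_douglasRachford_le)
    (douglasRachford_starProjection_add_starProjection U₁ U₂ (v 0))
    (fun k ↦ (hv k).trans (douglasRachford_apply U₁ U₂ (v k)).symm)
    (sub_starProjection_inf_add_starProjection_inf_orthogonal_mem U₁ U₂ (v 0))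
  refine ⟨?_, hbound⟩
  rw [tendsto_iff_norm_sub_tendsto_zero]
  refine squeeze_zero (fun _ ↦ norm_nonneg _) hbound ?_
  simpa using (tendsto_pow_atTop_nhds_zero_of_lt_one (cosFriedrichs_nonneg U₁ U₂)
    (cosFriedrichs_lt_one U₁ U₂)).mul_const ‖v 0 - w‖
end
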